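/- arXiv:math/0511113 — 3 statements merged into one kernel-verified Lean document; each statement's English description precedes it below -/
import Mathlib

section
/- In the group ring R[G] the left ideals R[G](1−σ) = {x(1−σ) : x ∈ R[G]} and R[G](1−τ) = {x(1−τ) : x ∈ R[G]} intersect trivially: R[G](1−σ) ∩ R[G](1−τ) = 0. -/
/-!
Reduced words give a length function `ℓ` on the free product `G = A ∗ B` such that for every
`g`, right multiplication by the nontrivial elements of `A`, or else by those of `B`, strictly
increases `ℓ`. An element of `R[G](1 - σ)` maps to zero in `R[G ⧸ A]` for `A = ⟨σ⟩`, so every `g`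
in its support shares its coset `gA` with another element of the support; likewise for
`B = ⟨τ⟩`. For `y ≠ 0` in both ideals, an element of maximal length in the support of `y`
contradicts this.
-/

open Monoid

theorem Finsupp.exists_mem_support_ne_map_eq_of_mapDomain_eq_zero {α β M : Type*}
    [AddCommMonoid M] {f : α → β} {v : α →₀ M} (hv : v.mapDomain f = 0) {a : α}
    (ha : a ∈ v.support) : ∃ b ∈ v.support, b ≠ a ∧ f b = f a := by
  classical
  by_contra! hfiber
  have hrest : (v.erase a).mapDomain f (f a) = 0 := by
    refine Finsupp.notMem_support_iff.mp fun hmem => ?_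
    obtain ⟨b, hb, hba⟩ := Finset.mem_image.mp (Finsupp.mapDomain_support hmem)
    rw [Finsupp.support_erase, Finset.mem_erase] at hb
    exact hfiber b hb.2 hb.1 hba
  have hva : v.mapDomain f (f a) = v a := by
    conv_lhs => rw [← Finsupp.single_add_erase a v]
    rw [Finsupp.mapDomain_add, Finsupp.mapDomain_single, Finsupp.add_apply, hrest,
      Finsupp.single_eq_same, add_zero]
  exact Finsupp.mem_support_iff.mp ha (by rw [← hva, hv, Finsupp.zero_apply])

theorem Option.exists_ne_some {ι : Type*} [Nontrivial ι] : ∀ o : Option ι, ∃ i, o ≠ some i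
  | none => ⟨Classical.arbitrary ι, (Option.some_ne_none _).symm⟩
  | some j => (exists_ne j).imp fun _ hi h => hi (Option.some_injective _ h).symm

theorem Monoid.CoprodI.Word.length_toList_equiv_of_mul {ι : Type*} {M : ι → Type*}
    [∀ i, Monoid (M i)] [DecidableEq ι] [∀ i, DecidableEq (M i)] {i : ι} {m : M i}
    (hm : m ≠ 1) {w : CoprodI M} (hw : (Word.equiv w).fstIdx ≠ some i) :
    (Word.equiv (CoprodI.of m * w)).toList.length = (Word.equiv w).toList.length + 1 := by
  change ((CoprodI.of m * w) • Word.empty).toList.length = _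
  rw [mul_smul]
  change (CoprodI.of m • Word.equiv w).toList.length = _
  rw [← Word.cons_eq_smul (h1 := hw) (h2 := hm)]
  rfl

namespace Subgroup

variable {G : Type*} [Group G]

theorem exists_length_lt_mul_of_bijective_coprodI_lift {ι : Type*} [Nontrivial ι]
    {H : ι → Subgroup G} (hH : Function.Bijective (CoprodI.lift fun i => (H i).subtype)) :
    ∃ ℓ : G → ℕ, ∀ g : G, ∃ i, ∀ h ∈ H i, h ≠ 1 → ℓ g < ℓ (g * h) := by
  classical
  let e := MulEquiv.ofBijective _ hH
  -- `ℓ g` is the length of the reduced word of `g⁻¹`, turning right multiplication in `G`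
  -- into the left multiplication under which reduced words are well behaved.
  refine ⟨fun g => (CoprodI.Word.equiv (e.symm g⁻¹)).toList.length, fun g => ?_⟩
  obtain ⟨i, hi⟩ := Option.exists_ne_some (CoprodI.Word.equiv (e.symm g⁻¹)).fstIdx
  refine ⟨i, fun h hh h1 => ?_⟩
  have hsplit :
      e.symm (g * h)⁻¹ = CoprodI.of (M := fun i => H i) (⟨h, hh⟩ : H i)⁻¹ * e.symm g⁻¹ := by
    rw [mul_inv_rev, map_mul]
    congr 1
    rw [e.symm_apply_eq, MulEquiv.ofBijective_apply, CoprodI.lift_of]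
    rfl
  simp only [hsplit]
  rw [CoprodI.Word.length_toList_equiv_of_mul _ hi]
  · exact Nat.lt_succ_self _
  · simpa [Subtype.ext_iff] using h1

def coprodIBoolMulEquiv (A B : Subgroup G) :
    CoprodI (fun b : Bool => ↥(cond b A B)) ≃* Coprod A B :=
  MonoidHom.toMulEquiv
    (CoprodI.lift fun b => Bool.rec (motive := fun b => ↥(cond b A B) →* Coprod A B)
      Coprod.inr Coprod.inl b)
    (Coprod.lift (CoprodI.of (M := fun b : Bool => ↥(cond b A B)) (i := true))
      (CoprodI.of (M := fun b : Bool => ↥(cond b A B)) (i := false)))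
    (CoprodI.ext_hom _ _ fun b => by cases b <;> ext <;> simp)
    (Coprod.hom_ext (by ext; simp) (by ext; simp))

theorem bijective_coprodI_lift_cond {A B : Subgroup G}
    (h : Function.Bijective (Coprod.lift A.subtype B.subtype)) :
    Function.Bijective (CoprodI.lift fun b : Bool => (cond b A B).subtype) := by
  have hfactor : CoprodI.lift (fun b : Bool => (cond b A B).subtype) =
      (Coprod.lift A.subtype B.subtype).comp (A.coprodIBoolMulEquiv B).toMonoidHom :=
    CoprodI.ext_hom _ _ fun b => by cases b <;> ext <;> simp [coprodIBoolMulEquiv]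
  rw [hfactor]
  exact h.comp (A.coprodIBoolMulEquiv B).bijective

end Subgroup

namespace MonoidAlgebra

variable {R G : Type*} [Group G]

theorem mapDomain_mk_mul_one_sub_of_mem [Ring R] {H : Subgroup G} {h : G} (hh : h ∈ H)
    (x : MonoidAlgebra R G) :
    mapDomain (QuotientGroup.mk : G → G ⧸ H) (x * (1 - of R G h)) = 0 := by
  induction x using MonoidAlgebra.induction_linear with
  | zero => simp
  | add x y hx hy => rw [add_mul, mapDomain_add, hx, hy, add_zero]
  | single g r =>
    rw [mul_sub, mul_one, of_apply, single_mul_single, mul_one]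
    ext
    simp [Finsupp.mapDomain_sub, QuotientGroup.mk_mul_of_mem g hh]

theorem eq_zero_of_mapDomain_mk_eq_zero [Semiring R] {ι : Type*} {H : ι → Subgroup G}
    {ℓ : G → ℕ} (hℓ : ∀ g : G, ∃ i, ∀ h ∈ H i, h ≠ 1 → ℓ g < ℓ (g * h))
    {z : MonoidAlgebra R G} (hz : ∀ i, mapDomain (QuotientGroup.mk : G → G ⧸ H i) z = 0) :
    z = 0 := by
  by_contra hne
  have hsupp : z.coeff.support.Nonempty := by simpa using hne
  obtain ⟨g, hg, hmax⟩ := z.coeff.support.exists_max_image ℓ hsupp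
  obtain ⟨i, hi⟩ := hℓ g
  obtain ⟨h, hh, hhg, hcoset⟩ :=
    Finsupp.exists_mem_support_ne_map_eq_of_mapDomain_eq_zero (congrArg coeff (hz i)) hg
  have hlt := hi (g⁻¹ * h) (QuotientGroup.eq.mp hcoset.symm)
    (by rwa [Ne, inv_mul_eq_one, eq_comm])
  rw [mul_inv_cancel_left] at hlt
  exact (hmax h hh).not_gt hlt

theorem eq_zero_of_mapDomain_mk_eq_zero_of_bijective_coprodI_lift [Semiring R] {ι : Type*}
    [Nontrivial ι] {H : ι → Subgroup G}
    (hH : Function.Bijective (CoprodI.lift fun i => (H i).subtype)) {z : MonoidAlgebra R G}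
    (hz : ∀ i, mapDomain (QuotientGroup.mk : G → G ⧸ H i) z = 0) : z = 0 :=
  let ⟨_, hℓ⟩ := Subgroup.exists_length_lt_mul_of_bijective_coprodI_lift hH
  eq_zero_of_mapDomain_mk_eq_zero hℓ hz

end MonoidAlgebra

theorem statement6_general {G : Type*} [Group G] (σ τ : G)
    (hfree : Function.Bijective
      (Monoid.Coprod.lift (Subgroup.zpowers σ).subtype (Subgroup.zpowers τ).subtype))
    (R : Type*) [CommRing R]
    (y : MonoidAlgebra R G)
    (hy1 : ∃ x : MonoidAlgebra R G, y = x * (1 - MonoidAlgebra.of R G σ))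
    (hy2 : ∃ x : MonoidAlgebra R G, y = x * (1 - MonoidAlgebra.of R G τ)) :
    y = 0 := by
  refine MonoidAlgebra.eq_zero_of_mapDomain_mk_eq_zero_of_bijective_coprodI_lift
    (Subgroup.bijective_coprodI_lift_cond hfree) (Bool.forall_bool.mpr ⟨?_, ?_⟩)
  · obtain ⟨x, rfl⟩ := hy2
    exact MonoidAlgebra.mapDomain_mk_mul_one_sub_of_mem (Subgroup.mem_zpowers τ) x
  · obtain ⟨x, rfl⟩ := hy1
    exact MonoidAlgebra.mapDomain_mk_mul_one_sub_of_mem (Subgroup.mem_zpowers σ) x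

/-- **Statement 6.** Let `G` be a group which is the free product of a cyclic group of
order 2 generated by `σ` and a cyclic group of order `n ≥ 3` generated by `τ` (such as a
Hecke triangle group).  In the group ring `R[G]` the left ideals `R[G](1-σ)` and
`R[G](1-τ)` intersect trivially. -/
theorem statement6 {G : Type*} [Group G] (n : ℕ) (hn : 3 ≤ n) (σ τ : G)
    (hσ : orderOf σ = 2) (hτ : orderOf τ = n)
    (hfree : Function.Bijective
      (Monoid.Coprod.lift (Subgroup.zpowers σ).subtype (Subgroup.zpowers τ).subtype))
    (R : Type*) [CommRing R]
    (y : MonoidAlgebra R G)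
    (hy1 : ∃ x : MonoidAlgebra R G, y = x * (1 - MonoidAlgebra.of R G σ))
    (hy2 : ∃ x : MonoidAlgebra R G, y = x * (1 - MonoidAlgebra.of R G τ)) :
    y = 0 :=
  statement6_general σ τ hfree R y hy1 hy2
end

section
/- The sequence of R-modules 0 → R[G]N_σ + R[G]N_τ → R[G] → R[G/⟨T⟩] → R → 0 is exact, where the second map sends a group element g ∈ G to the element g(1−σ)·∞ = [g⟨T⟩] − [gσ⟨T⟩] of the free R-module R[G/⟨T⟩] on the coset space G/⟨T⟩, and the third map is the augmentation sending each coset to 1. -/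
noncomputable section

variable {G : Type*} [Group G] (R : Type*) [CommRing R]

/-- `N_g = 1 + g + ⋯ + g^(m-1) ∈ R[G]` for an element `g` of finite order `m`. -/
def Nelt (g : G) : MonoidAlgebra R G :=
  ∑ i ∈ Finset.range (orderOf g), MonoidAlgebra.of R G (g ^ i)

variable (G) in
/-- The cusp set `G(∞)`, identified with the coset space `G/⟨T⟩` via `g∞ ↦ g⟨T⟩`. -/
abbrev CuspSet (T : G) := G ⧸ Subgroup.zpowers T

/-- The map `R[G] → R[G/⟨T⟩]` sending a group element `g ∈ G` to
`g(1-σ)∞ = [g⟨T⟩] - [gσ⟨T⟩]`. -/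
def cuspMap (σ T : G) : MonoidAlgebra R G →ₗ[R] (CuspSet G T →₀ R) :=
  (Finsupp.linearCombination R fun g : G =>
    Finsupp.single (QuotientGroup.mk g : CuspSet G T) (1 : R) -
      Finsupp.single (QuotientGroup.mk (g * σ) : CuspSet G T) (1 : R)) ∘ₗ
    (MonoidAlgebra.coeffLinearEquiv R).toLinearMap

/-- The augmentation map `R[G/⟨T⟩] → R` sending each coset to `1`. -/
def cuspAug (T : G) : (CuspSet G T →₀ R) →ₗ[R] R :=
  Finsupp.linearCombination R fun _ : CuspSet G T => (1 : R)

/-! Since `T = τσ`, `1 - T = (1 - τ) + τ(1 - σ)`; and the kernel of `R[G] → R[G/⟨t⟩]` is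
`R[G](1 - t)`. So if `x(1 - σ)` dies in `R[G/⟨T⟩]`, say `x(1 - σ) = z(1 - T)`, then
`w = (x - zτ)(1 - σ) = z(1 - τ)` has vanishing sums over all cosets of `⟨σ⟩` and of `⟨τ⟩`.
In the free product such a `w` is zero: at an element `g` of its support whose reduced word is
longest, right multiplication by the nontrivial elements of one of the two factors lengthens the
word, so `g` is alone in its coset. Hence `x - zτ` and `z` are killed by `1 - σ` and `1 - τ`,
and the kernel of right multiplication by `1 - t` is `R[G]N_t` (restrict to a transversal of
`G/⟨t⟩`; for `t` of infinite order both are zero). Exactness at `R[G/⟨T⟩]` holds because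
`[gσ] - [g]` and `[gτ] - [g] = [gτ] - [gτσ]` are in the image and `σ`, `τ` generate `G`.
-/

open MonoidAlgebra Subgroup

def rightPeriods {Y : Type*} (f : G → Y) : Subgroup G where
  carrier := {a | ∀ g, f (g * a) = f g}
  mul_mem' {a b} ha hb g := by rw [← mul_assoc, hb, ha]
  one_mem' g := by rw [mul_one]
  inv_mem' {a} ha g := by rw [← ha (g * a⁻¹), inv_mul_cancel_right]

def toCosets (H : Subgroup G) : MonoidAlgebra R G →ₗ[R] (G ⧸ H →₀ R) :=
  Finsupp.lmapDomain R R QuotientGroup.mk ∘ₗ (coeffLinearEquiv R).toLinearMap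

theorem toCosets_apply (H : Subgroup G) (x : MonoidAlgebra R G) :
    toCosets R H x = Finsupp.mapDomain QuotientGroup.mk x.coeff := rfl

@[simp]
theorem toCosets_single (H : Subgroup G) (g : G) (r : R) :
    toCosets R H (single g r) = Finsupp.single (g : G ⧸ H) r := by
  simp [toCosets_apply]

theorem toCosets_mul_one_sub_single {H : Subgroup G} {t : G} (ht : t ∈ H)
    (x : MonoidAlgebra R G) : toCosets R H (x * (1 - single t 1)) = 0 := by
  induction x using MonoidAlgebra.induction_linear with
  | zero => rw [zero_mul, map_zero]
  | add x y hx hy => rw [add_mul, map_add, hx, hy, add_zero]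
  | single g r =>
    rw [mul_sub, mul_one, single_mul_single, mul_one, map_sub, toCosets_single, toCosets_single,
      QuotientGroup.mk_mul_of_mem g ht, sub_self]

theorem ker_toCosets_zpowers (t : G) :
    LinearMap.ker (toCosets R (zpowers t)) =
      LinearMap.range (LinearMap.mulRight R (1 - single t (1 : R))) := by
  set D := LinearMap.range (LinearMap.mulRight R (1 - single t (1 : R)))
  refine le_antisymm (fun v hv => ?_) ?_
  · let f : G → MonoidAlgebra R G ⧸ D := fun g => D.mkQ (single g 1)
    have hf : zpowers t ≤ rightPeriods f := zpowers_le.2 fun g =>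
      ((Submodule.Quotient.eq D).2 ⟨single g 1, by simp [mul_sub, single_mul_single]⟩).symm
    have hfactor : D.mkQ = Finsupp.linearCombination R (fun c : G ⧸ zpowers t => f c.out) ∘ₗ
        toCosets R (zpowers t) := by
      ext g
      obtain ⟨⟨a, ha⟩, hout⟩ := QuotientGroup.mk_out_eq_mul (zpowers t) g
      simpa [hout, f] using (hf ha g).symm
    rw [LinearMap.mem_ker] at hv
    rw [← Submodule.Quotient.mk_eq_zero, ← Submodule.mkQ_apply, hfactor, LinearMap.comp_apply, hv,
      map_zero]
  · rintro _ ⟨x, rfl⟩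
    exact toCosets_mul_one_sub_single R (mem_zpowers t) x

theorem nelt_eq_sum (t : G) : Nelt R t = ∑ i ∈ Finset.range (orderOf t), single (t ^ i) 1 := by
  simp [Nelt, of_apply]

theorem nelt_mul_single_self (t : G) : Nelt R t * single t 1 = Nelt R t := by
  have hshift := (Finset.sum_range_succ' (fun i => single (t ^ i) (1 : R)) (orderOf t)).symm.trans
    (Finset.sum_range_succ _ _)
  rw [pow_orderOf_eq_one, pow_zero] at hshift
  simp_rw [nelt_eq_sum, Finset.sum_mul, single_mul_single, mul_one, ← pow_succ]
  exact add_right_cancel hshift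

theorem nelt_mul_one_sub_single (t : G) : Nelt R t * (1 - single t 1) = 0 := by
  rw [mul_sub, mul_one, nelt_mul_single_self, sub_self]

theorem eq_zero_of_mem_rightPeriods {t : G} (ht : ¬IsOfFinOrder t) {x : MonoidAlgebra R G}
    (hx : t ∈ rightPeriods x.coeff) : x = 0 := by
  ext g
  by_contra hg
  have hmem : ∀ k : ℕ, g * t ^ k ∈ (x.coeff.support : Set G) := fun k => by
    simpa [(zpowers_le.2 hx) (npow_mem_zpowers t k) g] using hg
  exact Set.infinite_of_injective_forall_mem
    ((mul_right_injective g).comp (injective_pow_iff_not_isOfFinOrder.2 ht)) hmem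
    x.coeff.support.finite_toSet

theorem exists_mul_nelt_eq {t : G} (ht : IsOfFinOrder t) {x : MonoidAlgebra R G}
    (hx : t ∈ rightPeriods x.coeff) : ∃ y, y * Nelt R t = x := by
  classical
  -- `x` restricted to the representatives `Quotient.out` of the cosets `g⟨t⟩`
  set y := ofCoeff (x.coeff.filter fun g : G => (QuotientGroup.mk g : G ⧸ zpowers t).out = g)
  refine ⟨y, ?_⟩
  ext g
  obtain ⟨⟨a, ha⟩, hout⟩ := QuotientGroup.mk_out_eq_mul (zpowers t) g
  have hterm : ∀ i : ℕ, y.coeff (g * (t ^ i)⁻¹) = if a = (t ^ i)⁻¹ then x.coeff g else 0 := by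
    intro i
    rw [coeff_ofCoeff, Finsupp.filter_apply,
      QuotientGroup.mk_mul_of_mem g (inv_mem (npow_mem_zpowers t i)), hout,
      (zpowers_le.2 hx) (inv_mem (npow_mem_zpowers t i)) g]
    simp
  obtain ⟨k, hk, hka⟩ := Finset.mem_image.1 (ht.mem_zpowers_iff_mem_range_orderOf.1 (inv_mem ha))
  simp only [nelt_eq_sum, Finset.mul_sum, coeff_sum, Finsupp.finsetSum_apply,
    coeff_mul_single_apply, mul_one, hterm]
  rw [Finset.sum_eq_single_of_mem k hk fun i hi hik => if_neg fun h => hik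
    (pow_injOn_Iio_orderOf (Finset.mem_range.1 hi) (Finset.mem_range.1 hk)
      ((inv_eq_iff_eq_inv.2 h).symm.trans hka.symm)),
    if_pos (inv_eq_iff_eq_inv.1 hka.symm)]

theorem ker_mulRight_one_sub_single (t : G) :
    LinearMap.ker (LinearMap.mulRight R (1 - single t (1 : R))) =
      LinearMap.range (LinearMap.mulRight R (Nelt R t)) := by
  refine le_antisymm (fun x hx => ?_) ?_
  · rw [LinearMap.mem_ker, LinearMap.mulRight_apply, mul_sub, mul_one, sub_eq_zero] at hx
    have hper : t ∈ rightPeriods x.coeff := fun g => by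
      conv_lhs => rw [hx]
      simp
    by_cases ht : IsOfFinOrder t
    · exact exists_mul_nelt_eq R ht hper
    · exact ⟨0, by rw [LinearMap.mulRight_apply, zero_mul, eq_zero_of_mem_rightPeriods R ht hper]⟩
  · rintro _ ⟨y, rfl⟩
    rw [LinearMap.mem_ker, LinearMap.mulRight_apply, LinearMap.mulRight_apply, mul_assoc,
      nelt_mul_one_sub_single, mul_zero]

theorem Monoid.CoprodI.Word.length_toList_of_smul {ι : Type*} {M : ι → Type*}
    [∀ i, Monoid (M i)] [DecidableEq ι] [∀ i, DecidableEq (M i)] {i : ι} {m : M i} (hm : m ≠ 1)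
    {w : Word M} (hw : w.fstIdx ≠ some i) :
    (of m • w).toList.length = w.toList.length + 1 := by
  rw [← Word.cons_eq_smul (h1 := hw) (h2 := hm), Word.cons_toList, List.length_cons]

theorem exists_length_of_bijective_coprodLift {A B : Subgroup G}
    (hfree : Function.Bijective (Monoid.Coprod.lift A.subtype B.subtype)) :
    ∃ ℓ : G → ℕ, ∀ g, (∀ a ∈ A, a ≠ 1 → ℓ (g * a) = ℓ g + 1) ∨
      (∀ b ∈ B, b ≠ 1 → ℓ (g * b) = ℓ g + 1) := by
  classical
  let M : Bool → Type _ := fun i => ↥(cond i A B)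
  let ψ : G →* Monoid.CoprodI M :=
    (Monoid.Coprod.lift (Monoid.CoprodI.of (M := M) (i := true))
      (Monoid.CoprodI.of (M := M) (i := false))).comp
      (MulEquiv.ofBijective _ hfree).symm.toMonoidHom
  have hψ : ∀ i (a : M i), ψ (a : G) = Monoid.CoprodI.of a := by
    rintro (_ | _) a
    · have he : (MulEquiv.ofBijective _ hfree).symm a = Monoid.Coprod.inr a := by
        rw [MulEquiv.symm_apply_eq, MulEquiv.ofBijective_apply, Monoid.Coprod.lift_apply_inr]
        rfl
      simp [ψ, he]
    · have he : (MulEquiv.ofBijective _ hfree).symm a = Monoid.Coprod.inl a := by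
        rw [MulEquiv.symm_apply_eq, MulEquiv.ofBijective_apply, Monoid.Coprod.lift_apply_inl]
        rfl
      simp [ψ, he]
  -- right multiplication by a factor acts on the first letter of the reduced word of `g⁻¹`
  let word : G → Monoid.CoprodI.Word M := fun g => ψ g⁻¹ • Monoid.CoprodI.Word.empty
  have grow : ∀ g i (a : M i), a ≠ 1 → (word g).fstIdx ≠ some i →
      (word (g * a)).toList.length = (word g).toList.length + 1 := by
    intro g i a ha hw
    have hword : word (g * a) = Monoid.CoprodI.of a⁻¹ • word g := by
      simp only [word, mul_inv_rev, map_mul, mul_smul, ← hψ]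
      rfl
    rw [hword, Monoid.CoprodI.Word.length_toList_of_smul (inv_ne_one.2 ha) hw]
  refine ⟨fun g => (word g).toList.length, fun g => ?_⟩
  by_cases h : (word g).fstIdx = some true
  · exact Or.inr fun b hb hb1 =>
      grow g false ⟨b, hb⟩ (fun h => hb1 (congrArg Subtype.val h)) (by simp [h])
  · exact Or.inl fun a ha ha1 => grow g true ⟨a, ha⟩ (fun h => ha1 (congrArg Subtype.val h)) h

theorem coeff_eq_zero_of_toCosets_eq_zero {H : Subgroup G} {w : MonoidAlgebra R G}
    (hw : toCosets R H w = 0) {g : G} (hg : ∀ a ∈ H, a ≠ 1 → w.coeff (g * a) = 0) :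
    w.coeff g = 0 := by
  classical
  have hsum := DFunLike.congr_fun hw (g : G ⧸ H)
  rw [toCosets_apply, Finsupp.mapDomain, Finsupp.sum_apply, Finsupp.sum_eq_single g] at hsum
  · simpa using hsum
  · intro h _ hne
    by_cases hc : (h : G ⧸ H) = g
    · obtain ⟨a, ha, rfl⟩ : ∃ a ∈ H, g * a = h :=
        ⟨g⁻¹ * h, QuotientGroup.eq.1 hc.symm, mul_inv_cancel_left g h⟩
      rw [hg a ha (by rintro rfl; exact hne (mul_one g)), Finsupp.single_zero, Finsupp.zero_apply]
    · exact Finsupp.single_eq_of_ne (Ne.symm hc)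
  · intro _
    rw [Finsupp.single_zero, Finsupp.zero_apply]

theorem disjoint_ker_toCosets_of_bijective {A B : Subgroup G}
    (hfree : Function.Bijective (Monoid.Coprod.lift A.subtype B.subtype)) :
    Disjoint (LinearMap.ker (toCosets R A)) (LinearMap.ker (toCosets R B)) := by
  obtain ⟨ℓ, hℓ⟩ := exists_length_of_bijective_coprodLift hfree
  rw [Submodule.disjoint_def]
  intro w hA hB
  by_contra hw
  obtain ⟨g, hg, hmax⟩ := Finset.exists_max_image w.coeff.support ℓ
    (Finsupp.support_nonempty_iff.2 fun h => hw (MonoidAlgebra.coeff_eq_zero.1 h))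
  have hvanish : ∀ a, ℓ (g * a) = ℓ g + 1 → w.coeff (g * a) = 0 := fun a ha => by
    by_contra hne
    have := hmax _ (Finsupp.mem_support_iff.2 hne)
    omega
  refine Finsupp.mem_support_iff.1 hg ?_
  rcases hℓ g with hgrow | hgrow
  · exact coeff_eq_zero_of_toCosets_eq_zero R hA fun a ha ha1 => hvanish a (hgrow a ha ha1)
  · exact coeff_eq_zero_of_toCosets_eq_zero R hB fun b hb hb1 => hvanish b (hgrow b hb hb1)

theorem cuspMap_single (σ T g : G) (r : R) :
    cuspMap R σ T (single g r) =
      Finsupp.single (g : CuspSet G T) r - Finsupp.single ((g * σ : G) : CuspSet G T) r := by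
  simp [cuspMap, smul_sub]

theorem cuspMap_eq_toCosets_comp (σ T : G) :
    cuspMap R σ T = toCosets R (zpowers T) ∘ₗ LinearMap.mulRight R (1 - single σ 1) := by
  ext g
  simp [cuspMap_single, mul_sub, single_mul_single]

theorem cuspAug_single (T : G) (c : CuspSet G T) (r : R) :
    cuspAug R T (Finsupp.single c r) = r := by
  simp [cuspAug]

theorem Finsupp.ker_linearCombination_const_le {X : Type*} {P : Submodule R (X →₀ R)} (x₀ : X)
    (h : ∀ x, Finsupp.single x 1 - Finsupp.single x₀ 1 ∈ P) :
    LinearMap.ker (Finsupp.linearCombination R fun _ : X => (1 : R)) ≤ P := by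
  have hfactor : P.mkQ =
      P.mkQ ∘ₗ Finsupp.lsingle x₀ ∘ₗ Finsupp.linearCombination R (fun _ : X => (1 : R)) := by
    ext x
    simpa using (Submodule.Quotient.eq P).2 (h x)
  intro y hy
  rw [← Submodule.Quotient.mk_eq_zero, ← Submodule.mkQ_apply, hfactor]
  simp [LinearMap.mem_ker.1 hy]

theorem range_cuspMap_eq_ker_cuspAug {σ τ T : G} (hgen : zpowers σ ⊔ zpowers τ = ⊤)
    (hT : T = τ * σ) :
    LinearMap.range (cuspMap R σ T) = LinearMap.ker (cuspAug R T) := by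
  refine le_antisymm ?_ ?_
  · rintro _ ⟨x, rfl⟩
    induction x using MonoidAlgebra.induction_linear with
    | zero => rw [map_zero]; exact zero_mem _
    | add x y hx hy => rw [map_add]; exact add_mem hx hy
    | single g r => simp [cuspMap_single, cuspAug_single]
  · set P := LinearMap.range (cuspMap R σ T)
    let f : G → (CuspSet G T →₀ R) ⧸ P := fun g => P.mkQ (Finsupp.single (g : CuspSet G T) 1)
    have hσ : σ ∈ rightPeriods f := fun g =>
      (Submodule.Quotient.eq P).2 ⟨-single g 1, by simp [cuspMap_single]⟩
    have hτ : τ ∈ rightPeriods f := fun g =>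
      (Submodule.Quotient.eq P).2 ⟨single (g * τ) 1, by
        rw [cuspMap_single, mul_assoc, ← hT, QuotientGroup.mk_mul_of_mem g (mem_zpowers T)]⟩
    have hper : rightPeriods f = ⊤ :=
      eq_top_iff.2 (hgen ▸ sup_le (zpowers_le.2 hσ) (zpowers_le.2 hτ))
    refine Finsupp.ker_linearCombination_const_le R ((1 : G) : CuspSet G T) fun c => ?_
    obtain ⟨g, rfl⟩ := QuotientGroup.mk_surjective c
    have := (hper ▸ mem_top g : g ∈ rightPeriods f) 1
    rw [one_mul] at this
    exact (Submodule.Quotient.eq P).1 this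

theorem sup_range_mulRight_nelt_eq_ker_cuspMap {σ τ T : G}
    (hfree : Function.Bijective
      (Monoid.Coprod.lift (Subgroup.zpowers σ).subtype (Subgroup.zpowers τ).subtype))
    (hT : T = τ * σ) :
    LinearMap.range (LinearMap.mulRight R (Nelt R σ)) ⊔
        LinearMap.range (LinearMap.mulRight R (Nelt R τ)) = LinearMap.ker (cuspMap R σ T) := by
  have hsplit : single T (1 : R) = single τ 1 * single σ 1 := by
    rw [single_mul_single, one_mul, hT]
  refine le_antisymm (sup_le ?_ ?_) fun x hx => ?_
  · rintro _ ⟨a, rfl⟩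
    rw [LinearMap.mem_ker, cuspMap_eq_toCosets_comp, LinearMap.comp_apply,
      LinearMap.mulRight_apply, LinearMap.mulRight_apply, mul_assoc, nelt_mul_one_sub_single,
      mul_zero, map_zero]
  · rintro _ ⟨b, rfl⟩
    have hNτ : Nelt R τ * (1 - single σ 1) = Nelt R τ * (1 - single T 1) := by
      rw [hsplit, mul_sub, mul_sub, ← mul_assoc, nelt_mul_single_self]
    rw [LinearMap.mem_ker, cuspMap_eq_toCosets_comp, LinearMap.comp_apply,
      LinearMap.mulRight_apply, LinearMap.mulRight_apply, mul_assoc, hNτ, ← mul_assoc]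
    exact toCosets_mul_one_sub_single R (mem_zpowers T) _
  · rw [LinearMap.mem_ker, cuspMap_eq_toCosets_comp, LinearMap.comp_apply, ← LinearMap.mem_ker,
      ker_toCosets_zpowers] at hx
    obtain ⟨z, hz⟩ := hx
    rw [LinearMap.mulRight_apply, LinearMap.mulRight_apply] at hz
    have hw : (x - z * single τ 1) * (1 - single σ 1) = z * (1 - single τ 1) := by
      rw [sub_mul, ← hz, hsplit]
      noncomm_ring
    have hzero : z * (1 - single τ 1) = 0 :=
      Submodule.disjoint_def.1 (disjoint_ker_toCosets_of_bijective R hfree) _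
        (hw ▸ toCosets_mul_one_sub_single R (mem_zpowers σ) _)
        (toCosets_mul_one_sub_single R (mem_zpowers τ) z)
    obtain ⟨a, ha⟩ : x - z * single τ 1 ∈ LinearMap.range (LinearMap.mulRight R (Nelt R σ)) := by
      rw [← ker_mulRight_one_sub_single, LinearMap.mem_ker, LinearMap.mulRight_apply, hw, hzero]
    obtain ⟨b, hb⟩ : z ∈ LinearMap.range (LinearMap.mulRight R (Nelt R τ)) := by
      rw [← ker_mulRight_one_sub_single, LinearMap.mem_ker, LinearMap.mulRight_apply, hzero]
    rw [LinearMap.mulRight_apply] at ha hb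
    refine Submodule.mem_sup.2 ⟨_, ⟨a, rfl⟩, _, ⟨b, rfl⟩, ?_⟩
    rw [LinearMap.mulRight_apply, LinearMap.mulRight_apply, ha, ← nelt_mul_single_self,
      ← mul_assoc, hb, sub_add_cancel]

theorem statement7 (σ τ : G)
    (hfree : Function.Bijective
      (Monoid.Coprod.lift (Subgroup.zpowers σ).subtype (Subgroup.zpowers τ).subtype))
    (T : G) (hT : T = τ * σ) :
    LinearMap.range (LinearMap.mulRight R (Nelt R σ)) ⊔
        LinearMap.range (LinearMap.mulRight R (Nelt R τ)) =
      LinearMap.ker (cuspMap R σ T) ∧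
    LinearMap.range (cuspMap R σ T) = LinearMap.ker (cuspAug R T) ∧
    Function.Surjective (cuspAug R T) := by
  have hgen : zpowers σ ⊔ zpowers τ = ⊤ := by
    simpa [MonoidHom.range_eq_top.2 hfree.2] using
      (Monoid.Coprod.range_lift (zpowers σ).subtype (zpowers τ).subtype).symm
  exact ⟨sup_range_mulRight_nelt_eq_ker_cuspMap R hfree hT,
    range_cuspMap_eq_ker_cuspAug R hgen hT,
    fun r => ⟨Finsupp.single ((1 : G) : CuspSet G T) r, cuspAug_single R T _ r⟩⟩
end
end

section
/- Let X be a topological space, S a (not necessarily commutative) ring with unit, and let I be an injective object in the category of sheaves of left S-modules on X. Then for every open set U ⊆ X the S-module of sections I(U) is an injective object of the category of left S-modules. -/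
/-!
Taking sections over `U` is right adjoint to `M ↦` the sheafification of the presheaf
`V ↦ ∐_{V ⟶ U} M`. This left adjoint preserves monomorphisms, because coproducts of modules
are exact and sheafification is left exact, and a right adjoint of a functor preserving
monomorphisms preserves injective objects.
-/

open CategoryTheory TopologicalSpace Opposite CategoryTheory.Limits

universe u

namespace CategoryTheory

variable {C : Type*} [Category C] {D : Type*} [Category D]

theorem Limits.Sigma.map_mono_of_hasExactColimitsOfShape {ι : Type*}
    [HasColimitsOfShape (Discrete ι) D] [HasExactColimitsOfShape (Discrete ι) D]
    [HasFiniteLimits D] {f g : ι → D} (p : ∀ i, f i ⟶ g i) [∀ i, Mono (p i)] :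
    Mono (Limits.Sigma.map p) := by
  let φ : Discrete.functor f ⟶ Discrete.functor g := Discrete.natTrans fun i => p i.as
  have : Mono φ := by
    rw [NatTrans.mono_iff_mono_app]
    exact fun i => inferInstanceAs (Mono (p i.as))
  have : (colim : (Discrete ι ⥤ D) ⥤ D).PreservesMonomorphisms :=
    preservesMonomorphisms_of_preservesLimitsOfShape _
  exact inferInstanceAs (Mono (colim.map φ))

instance evaluationLeftAdjoint_preservesMonomorphisms [HasFiniteLimits D]
    [∀ a b : C, HasCoproductsOfShape (a ⟶ b) D]
    [∀ a b : C, HasExactColimitsOfShape (Discrete (a ⟶ b)) D] (c : C) :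
    (evaluationLeftAdjoint D c).PreservesMonomorphisms where
  preserves f _ := by
    rw [NatTrans.mono_iff_mono_app]
    exact fun t => Limits.Sigma.map_mono_of_hasExactColimitsOfShape (fun _ : c ⟶ t => f)

theorem Sheaf.injective_obj_obj [HasFiniteLimits D]
    [∀ a b : Cᵒᵖ, HasCoproductsOfShape (a ⟶ b) D]
    [∀ a b : Cᵒᵖ, HasExactColimitsOfShape (Discrete (a ⟶ b)) D]
    {J : GrothendieckTopology C} [HasWeakSheafify J D] [PreservesFiniteLimits (presheafToSheaf J D)]
    (I : Sheaf J D) [hI : Injective I] (U : Cᵒᵖ) : Injective (I.obj.obj U) :=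
  have : (presheafToSheaf J D).PreservesMonomorphisms :=
    preservesMonomorphisms_of_preservesLimitsOfShape _
  Injective.injective_of_adjoint
    ((evaluationAdjunctionRight D U).comp (sheafificationAdjunction J D)) I

end CategoryTheory

/-- **Statement 15.** Let `X` be a topological space, `S` a (not necessarily commutative)
ring with unit, and let `I` be an injective object in the category of sheaves of left
`S`-modules on `X`.  Then for every open set `U ⊆ X` the `S`-module of sections `I(U)` is
an injective object of the category of left `S`-modules. -/
theorem statement15 (X : TopCat.{u}) (S : Type u) [Ring S]
    (I : TopCat.Sheaf (ModuleCat.{u} S) X) (hI : Injective I) (U : Opens X) :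
    Injective (I.val.obj (op U)) :=
  Sheaf.injective_obj_obj I (op U) (hI := hI)
end
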